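/- m-dimensional Loss-Yau identity: let γ₁,…,γ_m be Hermitian ℓ×ℓ matrices with γⱼγ_k + γ_kγⱼ = 2δ_{jk}I, and define ψ(x) = (1+|x|²)^{-m/2}(I + i x·γ)φ₀ with φ₀ = (1,0,…,0)ᵀ ∈ ℂ^ℓ. Then |ψ(x)| = (1+|x|²)^{-(m-1)/2} and (γ·p)ψ(x) = m(1+|x|²)^{-1}ψ(x). -/

import Mathlib

/-
With `A = x·γ`, the Clifford relations give `A² = |x|²` and `A` is Hermitian, so
`(I + iA)ᴴ (I + iA) = (1 + |x|²) I`; this gives the norm of `ψ`.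
For the Dirac equation write `ψ = c v` with `c = (1 + |x|²)^(-m/2)` and `v = (I + iA)φ₀`.
The Leibniz rule gives `(γ·p)(c v) = c (γ·p)v - i (∇c·γ) v`, where `(γ·p)v = Σⱼ γⱼ² φ₀ = m φ₀`
and `∇c·γ = -m c A / (1 + |x|²)`. Since `iA (I + iA) = (I + iA) - (1 + |x|²)`, the two terms
combine to `m (1 + |x|²)⁻¹ ψ`.
-/
open MeasureTheory Real
open scoped ENNReal

noncomputable section

def gammaP {m ℓ : ℕ} (γ : Fin m → Matrix (Fin ℓ) (Fin ℓ) ℂ)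
    (f : EuclideanSpace ℝ (Fin m) → EuclideanSpace ℂ (Fin ℓ))
    (x : EuclideanSpace ℝ (Fin m)) : EuclideanSpace ℂ (Fin ℓ) :=
  (WithLp.equiv 2 (Fin ℓ → ℂ)).symm
    (-Complex.I • ∑ j : Fin m, (γ j).mulVec
      (WithLp.equiv 2 (Fin ℓ → ℂ) (fderiv ℝ f x (EuclideanSpace.single j 1))))

def psiM {m ℓ : ℕ} (hl : 0 < ℓ) (γ : Fin m → Matrix (Fin ℓ) (Fin ℓ) ℂ)
    (x : EuclideanSpace ℝ (Fin m)) : EuclideanSpace ℂ (Fin ℓ) :=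
  (WithLp.equiv 2 (Fin ℓ → ℂ)).symm
    ((((1 + ‖x‖ ^ 2) ^ (-(m:ℝ)/2) : ℝ) : ℂ) •
      ((1 : Matrix (Fin ℓ) (Fin ℓ) ℂ) +
        Complex.I • ∑ j : Fin m, ((x j : ℝ) : ℂ) • γ j).mulVec
          (Pi.single ⟨0, hl⟩ 1))

open Matrix

def IsCliffordFamily {ι A : Type*} [DecidableEq ι] [Ring A] (γ : ι → A) : Prop :=
  ∀ j k, γ j * γ k + γ k * γ j = if j = k then 2 else 0

namespace IsCliffordFamily

variable {ι A : Type*} [DecidableEq ι] [Ring A] {γ : ι → A}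

theorem mul_self [Module ℝ A] (h : IsCliffordFamily γ) (j : ι) : γ j * γ j = 1 := by
  have h2 : (2 : ℝ) • (γ j * γ j) = (2 : ℝ) • 1 := by
    rw [two_smul, h j j, if_pos rfl, two_smul, one_add_one_eq_two]
  exact smul_right_injective A two_ne_zero h2

theorem sum_mul_self [Module ℝ A] [Fintype ι] (h : IsCliffordFamily γ) :
    ∑ j, γ j * γ j = (Fintype.card ι : ℝ) • 1 := by
  simp [h.mul_self, ← Nat.cast_smul_eq_nsmul ℝ]

theorem sum_smul_mul_self [Algebra ℝ A] [Fintype ι] (h : IsCliffordFamily γ)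
    (x : EuclideanSpace ℝ ι) :
    (∑ j, x j • γ j) * (∑ j, x j • γ j) = ‖x‖ ^ 2 • 1 := by
  rw [EuclideanSpace.real_norm_sq_eq]
  set S := (∑ j, x j • γ j) * (∑ j, x j • γ j)
  have hS : S = ∑ j, ∑ k, (x j * x k) • (γ j * γ k) := by
    simp only [S, Finset.sum_mul_sum, smul_mul_smul_comm]
  have hS_swap : S = ∑ j, ∑ k, (x j * x k) • (γ k * γ j) := by
    rw [hS, Finset.sum_comm]
    exact Finset.sum_congr rfl fun j _ => Finset.sum_congr rfl fun k _ => by rw [mul_comm]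
  have h2 : (2 : ℝ) • S = (2 : ℝ) • (∑ j, x j ^ 2) • 1 := by
    calc (2 : ℝ) • S = ∑ j, ∑ k, (x j * x k) • (γ j * γ k + γ k * γ j) := by
          rw [two_smul]
          nth_rewrite 1 [hS]
          rw [hS_swap]
          simp only [smul_add, Finset.sum_add_distrib]
      _ = ∑ j, (x j * x j) • (2 : A) := by
          simp only [h _ _, smul_ite, smul_zero, Finset.sum_ite_eq, Finset.mem_univ, if_true]
      _ = (2 : ℝ) • (∑ j, x j ^ 2) • 1 := by
          rw [Finset.sum_smul, Finset.smul_sum]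
          refine Finset.sum_congr rfl fun j _ => ?_
          rw [show (2 : A) = (2 : ℝ) • 1 by rw [two_smul, one_add_one_eq_two], smul_smul, smul_smul,
            sq, mul_comm]
  exact smul_right_injective A two_ne_zero h2

end IsCliffordFamily

theorem star_one_add_I_smul_mul_self {A : Type*} [Ring A] [StarRing A] [Algebra ℂ A]
    [StarModule ℂ A] {a : A} (ha : IsSelfAdjoint a) :
    star (1 + Complex.I • a) * (1 + Complex.I • a) = 1 + a * a := by
  rw [star_add, star_one, star_smul, ha.star_eq, Complex.star_def, Complex.conj_I]
  simp [add_mul, mul_add, smul_smul]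

theorem I_smul_mul_one_add_I_smul {A : Type*} [Ring A] [Algebra ℂ A] (a : A) :
    Complex.I • a * (1 + Complex.I • a) = (1 + Complex.I • a) - (1 + a * a) := by
  simp only [mul_add, mul_one, smul_mul_smul_comm, Complex.I_mul_I, neg_one_smul]
  abel

theorem norm_toLp_mulVec_sq {𝕜 n : Type*} [RCLike 𝕜] [Fintype n] [DecidableEq n]
    {M : Matrix n n 𝕜} {c : ℝ} (hM : Mᴴ * M = (c : 𝕜) • 1) (v : n → 𝕜) :
    ‖WithLp.toLp 2 (M *ᵥ v)‖ ^ 2 = c * ‖WithLp.toLp 2 v‖ ^ 2 := by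
  have key : star (M *ᵥ v) ⬝ᵥ (M *ᵥ v) = (c : 𝕜) * (star v ⬝ᵥ v) := by
    rw [star_mulVec, ← dotProduct_mulVec, mulVec_mulVec, hM, Matrix.smul_mulVec, one_mulVec,
      dotProduct_smul, smul_eq_mul]
  rw [← RCLike.ofReal_inj (K := 𝕜)]
  push_cast
  rw [← inner_self_eq_norm_sq_to_K, ← inner_self_eq_norm_sq_to_K, EuclideanSpace.inner_toLp_toLp,
    EuclideanSpace.inner_toLp_toLp, dotProduct_comm, key, dotProduct_comm]

theorem hasFDerivAt_const_add_sum_smul {ι F : Type*} [Fintype ι] [NormedAddCommGroup F]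
    [NormedSpace ℝ F] (a : F) (b : ι → F) (x : EuclideanSpace ℝ ι) :
    HasFDerivAt (fun y : EuclideanSpace ℝ ι => a + ∑ j, y j • b j)
      (∑ j, (EuclideanSpace.proj (𝕜 := ℝ) j).smulRight (b j)) x :=
  (HasFDerivAt.fun_sum fun j _ =>
    ((EuclideanSpace.proj (𝕜 := ℝ) (ι := ι) j).hasFDerivAt (x := x)).smul_const (b j)).const_add a

theorem hasFDerivAt_one_add_norm_sq_rpow {E : Type*} [NormedAddCommGroup E]
    [InnerProductSpace ℝ E] (p : ℝ) (x : E) :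
    HasFDerivAt (fun y : E => (1 + ‖y‖ ^ 2) ^ p)
      ((p * (1 + ‖x‖ ^ 2) ^ (p - 1) * 2) • innerSL ℝ x) x := by
  have h := ((hasFDerivAt_id x).norm_sq.const_add 1).rpow_const (p := p) (Or.inl (by positivity))
  simpa [mul_smul, ofNat_smul_eq_nsmul] using h

theorem gammaP_smul {m ℓ : ℕ} (γ : Fin m → Matrix (Fin ℓ) (Fin ℓ) ℂ)
    {c : EuclideanSpace ℝ (Fin m) → ℝ} {f : EuclideanSpace ℝ (Fin m) → EuclideanSpace ℂ (Fin ℓ)}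
    {x : EuclideanSpace ℝ (Fin m)} (hc : DifferentiableAt ℝ c x) (hf : DifferentiableAt ℝ f x) :
    gammaP γ (fun y => c y • f y) x = c x • gammaP γ f x + WithLp.toLp 2
      ((-Complex.I) • (∑ j, fderiv ℝ c x (EuclideanSpace.single j 1) • γ j) *ᵥ (f x).ofLp) := by
  rw [gammaP, gammaP, fderiv_fun_smul hc hf]
  ext i
  simp [Matrix.sum_mulVec, Matrix.mulVec_add, Matrix.mulVec_smul, Matrix.smul_mulVec,
    Finset.sum_add_distrib, Finset.mul_sum, mul_left_comm]

theorem toLp_one_add_I_smul_sum_smul_mulVec {m ℓ : ℕ} (γ : Fin m → Matrix (Fin ℓ) (Fin ℓ) ℂ)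
    (φ : Fin ℓ → ℂ) (y : EuclideanSpace ℝ (Fin m)) :
    WithLp.toLp 2 ((1 + Complex.I • ∑ j, y j • γ j) *ᵥ φ) =
      WithLp.toLp 2 φ + ∑ j, y j • WithLp.toLp 2 (Complex.I • γ j *ᵥ φ) := by
  ext i
  simp [Matrix.add_mulVec, Matrix.sum_mulVec, Matrix.smul_mulVec, Finset.mul_sum, mul_left_comm]

theorem hasFDerivAt_toLp_one_add_I_smul_sum_smul_mulVec {m ℓ : ℕ}
    (γ : Fin m → Matrix (Fin ℓ) (Fin ℓ) ℂ) (φ : Fin ℓ → ℂ) (x : EuclideanSpace ℝ (Fin m)) :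
    HasFDerivAt (fun y : EuclideanSpace ℝ (Fin m) =>
        WithLp.toLp 2 ((1 + Complex.I • ∑ j, y j • γ j) *ᵥ φ))
      (∑ j, (EuclideanSpace.proj (𝕜 := ℝ) j).smulRight (WithLp.toLp 2 (Complex.I • γ j *ᵥ φ)))
      x := by
  simp only [toLp_one_add_I_smul_sum_smul_mulVec]
  exact hasFDerivAt_const_add_sum_smul _ _ x

theorem gammaP_one_add_I_smul_sum_smul_mulVec {m ℓ : ℕ} (γ : Fin m → Matrix (Fin ℓ) (Fin ℓ) ℂ)
    (φ : Fin ℓ → ℂ) (x : EuclideanSpace ℝ (Fin m)) :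
    gammaP γ (fun y => WithLp.toLp 2 ((1 + Complex.I • ∑ j, y j • γ j) *ᵥ φ)) x =
      WithLp.toLp 2 ((∑ j, γ j * γ j) *ᵥ φ) := by
  rw [gammaP, (hasFDerivAt_toLp_one_add_I_smul_sum_smul_mulVec γ φ x).fderiv]
  ext i
  simp [Matrix.sum_mulVec, Matrix.mulVec_smul, Matrix.mulVec_mulVec, Finset.mul_sum, ← mul_assoc]

theorem psiM_eq_smul {m ℓ : ℕ} (hl : 0 < ℓ) (γ : Fin m → Matrix (Fin ℓ) (Fin ℓ) ℂ) :
    psiM hl γ = fun y => (1 + ‖y‖ ^ 2) ^ (-(m : ℝ) / 2) •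
      WithLp.toLp 2 ((1 + Complex.I • ∑ j, y j • γ j) *ᵥ Pi.single ⟨0, hl⟩ 1) := by
  funext y
  simp only [psiM, Complex.coe_smul]
  rfl

theorem norm_psiM {m ℓ : ℕ} (hl : 0 < ℓ) {γ : Fin m → Matrix (Fin ℓ) (Fin ℓ) ℂ}
    (hγ : IsCliffordFamily γ) (hherm : ∀ j, (γ j).IsHermitian) (x : EuclideanSpace ℝ (Fin m)) :
    ‖psiM hl γ x‖ = (1 + ‖x‖ ^ 2) ^ (-((m : ℝ) - 1) / 2) := by
  have hA : IsSelfAdjoint (∑ j, x j • γ j) :=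
    isSelfAdjoint_sum _ fun j _ => (IsSelfAdjoint.all (x j)).smul (hherm j).isSelfAdjoint
  have hM : (1 + Complex.I • ∑ j, x j • γ j)ᴴ * (1 + Complex.I • ∑ j, x j • γ j) =
      ((1 + ‖x‖ ^ 2 : ℝ) : ℂ) • 1 := by
    rw [← Matrix.star_eq_conjTranspose, star_one_add_I_smul_mul_self hA, hγ.sum_smul_mul_self,
      Complex.coe_smul, add_smul, one_smul]
  have hV : ‖WithLp.toLp 2 ((1 + Complex.I • ∑ j, x j • γ j) *ᵥ Pi.single ⟨0, hl⟩ 1)‖ =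
      (1 + ‖x‖ ^ 2) ^ (1 / 2 : ℝ) := by
    have hφ : ‖WithLp.toLp 2 (Pi.single (M := fun _ : Fin ℓ => ℂ) ⟨0, hl⟩ 1)‖ = 1 := by simp
    rw [← Real.sqrt_eq_rpow, ← Real.sqrt_sq (norm_nonneg _),
      norm_toLp_mulVec_sq (c := 1 + ‖x‖ ^ 2) hM, hφ, one_pow, mul_one]
  rw [psiM_eq_smul, norm_smul, Real.norm_of_nonneg (by positivity), hV,
    ← Real.rpow_add (by positivity)]
  ring_nf

theorem gammaP_psiM {m ℓ : ℕ} (hl : 0 < ℓ) {γ : Fin m → Matrix (Fin ℓ) (Fin ℓ) ℂ}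
    (hγ : IsCliffordFamily γ) (x : EuclideanSpace ℝ (Fin m)) :
    gammaP γ (psiM hl γ) x = (m / (1 + ‖x‖ ^ 2) : ℝ) • psiM hl γ x := by
  set φ : Fin ℓ → ℂ := Pi.single ⟨0, hl⟩ 1
  set r := 1 + ‖x‖ ^ 2
  set p := -(m : ℝ) / 2
  set A := ∑ j, x j • γ j
  have hc := hasFDerivAt_one_add_norm_sq_rpow p x
  have hV := hasFDerivAt_toLp_one_add_I_smul_sum_smul_mulVec γ φ x
  have hgrad : ∑ j, ((p * r ^ (p - 1) * 2) • innerSL ℝ x) (EuclideanSpace.single j 1) • γ j =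
      (p * r ^ (p - 1) * 2) • A := by
    simp [A, Finset.smul_sum, mul_smul, EuclideanSpace.inner_single_right]
  rw [psiM_eq_smul, gammaP_smul γ hc.differentiableAt hV.differentiableAt,
    gammaP_one_add_I_smul_sum_smul_mulVec, hc.fderiv, hgrad, hγ.sum_mul_self]
  set M := 1 + Complex.I • A
  have hr : r ≠ 0 := by positivity
  have hIAM : Complex.I • A * M = M - r • 1 := by
    rw [I_smul_mul_one_add_I_smul, hγ.sum_smul_mul_self x, add_smul, one_smul]
  have key : (r ^ p * m) • (1 : Matrix (Fin ℓ) (Fin ℓ) ℂ) +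
      (-(p * r ^ (p - 1) * 2)) • (Complex.I • A * M) = (m / r * r ^ p) • M := by
    have hcoeff : -(p * r ^ (p - 1) * 2) = m / r * r ^ p := by
      rw [Real.rpow_sub_one hr]
      ring
    have hcancel : m / r * r ^ p * r = r ^ p * m := by
      field_simp
    rw [hIAM, hcoeff, smul_sub, smul_smul, hcancel]
    abel
  calc _ = WithLp.toLp 2 (((r ^ p * m) • (1 : Matrix (Fin ℓ) (Fin ℓ) ℂ) +
      (-(p * r ^ (p - 1) * 2)) • (Complex.I • A * M)) *ᵥ φ) := by
        simp only [Fintype.card_fin, Matrix.add_mulVec, Matrix.smul_mulVec,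
          ← Matrix.mulVec_mulVec, Matrix.one_mulVec, WithLp.toLp_add, WithLp.toLp_smul, smul_smul]
        rw [smul_comm, neg_smul, neg_smul, smul_neg]
    _ = _ := by
        rw [key]
        simp only [Matrix.smul_mulVec, WithLp.toLp_smul, smul_smul]
        rfl

theorem loss_yau_m_dim (m ℓ : ℕ) (hl : 0 < ℓ)
    (γ : Fin m → Matrix (Fin ℓ) (Fin ℓ) ℂ)
    (hherm : ∀ j, (γ j).IsHermitian)
    (hanti : ∀ j k, γ j * γ k + γ k * γ j =
      if j = k then (2:ℂ) • (1 : Matrix (Fin ℓ) (Fin ℓ) ℂ) else 0) :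
    ∀ x : EuclideanSpace ℝ (Fin m),
      ‖psiM hl γ x‖ = (1 + ‖x‖ ^ 2) ^ (-((m:ℝ) - 1)/2) ∧
      gammaP γ (psiM hl γ) x = ((m / (1 + ‖x‖ ^ 2) : ℝ)) • psiM hl γ x := by
  have hγ : IsCliffordFamily γ := fun j k => by
    rw [hanti j k, two_smul, one_add_one_eq_two]
  exact fun x => ⟨norm_psiM hl hγ hherm x, gammaP_psiM hl hγ x⟩

end
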